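/- arXiv:2512.13183 — 5 statements merged into one kernel-verified Lean document; each statement's English description precedes it below -/
import Mathlib

section
/- Let f : ℝ → ℝ be convex and let φ be a mollifier that is an even function. Then for every ε > 0 the mollification F_ε := f ⋆ φ_ε satisfies F_ε(x) ≥ f(x) for all x ∈ ℝ. -/
open MeasureTheory

/-- A mollifier: smooth, supported in `[-1,1]`, nonnegative, integral one. -/
structure IsMollifier (φ : ℝ → ℝ) : Prop where
  smooth : ContDiff ℝ (⊤ : ℕ∞) φ
  supp : Function.support φ ⊆ Set.Icc (-1 : ℝ) 1
  nonneg : ∀ x, 0 ≤ φ x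
  integral_one : ∫ x, φ x = 1

/-- The mollification `F_ε = f ⋆ φ_ε`, with `φ_ε x = (1/ε) φ(x/ε)`. -/
noncomputable def mollify (φ : ℝ → ℝ) (ε : ℝ) (f : ℝ → ℝ) (x : ℝ) : ℝ :=
  ∫ t, f (x - t) * ((1 / ε) * φ (t / ε))

theorem mollify_ge_of_convex
    (f : ℝ → ℝ) (hf : ConvexOn ℝ Set.univ f)
    (φ : ℝ → ℝ) (hφ : IsMollifier φ) (heven : ∀ x, φ (-x) = φ x)
    (ε : ℝ) (hε : 0 < ε) :
    ∀ x : ℝ, f x ≤ mollify φ ε f x := by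
  intro x
  have hφc : Continuous φ := hφ.smooth.continuous
  have hfc : Continuous f := by
    exact continuousOn_univ.1 (hf.continuousOn isOpen_univ)
  set ψ : ℝ → ℝ := fun t => (1 / ε) * φ (t / ε) with hψdef
  have hψc : Continuous ψ := continuous_const.mul (hφc.comp (continuous_id.div_const ε))
  have hψ0 : ∀ t, 0 ≤ ψ t := fun t => mul_nonneg (by positivity) (hφ.nonneg _)
  have hψsupp : ∀ t ∉ Set.Icc (-ε) ε, ψ t = 0 := by
    intro t ht
    have hφ0 : φ (t / ε) = 0 := by
      by_contra h
      have h2 := hφ.supp (Function.mem_support.2 h)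
      simp only [Set.mem_Icc] at h2 ht
      apply ht
      have h3 := mul_le_mul_of_nonneg_right h2.1 hε.le
      have h4 := mul_le_mul_of_nonneg_right h2.2 hε.le
      rw [div_mul_cancel₀ t hε.ne'] at h3 h4
      constructor <;> linarith
    simp [hψdef, hφ0]
  have hψcs : HasCompactSupport ψ := HasCompactSupport.intro isCompact_Icc hψsupp
  have hψeven : ∀ t, ψ (-t) = ψ t := by
    intro t; simp only [hψdef, neg_div]; rw [heven]
  have hψint1 : ∫ t, ψ t = 1 := by
    simp only [hψdef]
    rw [integral_const_mul, Measure.integral_comp_div (g := φ) (a := ε), hφ.integral_one,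
      abs_of_pos hε]
    field_simp
    simp
  have hψInt : Integrable ψ := hψc.integrable_of_hasCompactSupport hψcs
  have hI1 : Integrable (fun t => f (x - t) * ψ t) :=
    ((hfc.comp (continuous_const.sub continuous_id)).mul hψc).integrable_of_hasCompactSupport
      hψcs.mul_left
  have hI2 : Integrable (fun t => f (x + t) * ψ t) :=
    ((hfc.comp (continuous_const.add continuous_id)).mul hψc).integrable_of_hasCompactSupport
      hψcs.mul_left
  have hrefl : ∫ t, f (x + t) * ψ t = ∫ t, f (x - t) * ψ t := by
    rw [← integral_neg_eq_self (fun t => f (x + t) * ψ t)]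
    congr 1
    funext t
    rw [hψeven, ← sub_eq_add_neg]
  have hI0 : Integrable (fun t => f x * ψ t) := hψInt.const_mul (f x)
  have key : ∫ t, f x * ψ t ≤ ∫ t, f (x - t) * ψ t := by
    have : ∫ t, f (x - t) * ψ t =
        ∫ t, ((f (x - t) + f (x + t)) / 2) * ψ t := by
      have : ∀ t : ℝ, ((f (x - t) + f (x + t)) / 2) * ψ t
          = (f (x - t) * ψ t + f (x + t) * ψ t) / 2 := by
        intro t; ring
      simp only [this]
      rw [integral_div, integral_add hI1 hI2, hrefl]
      ring
    rw [this]
    apply integral_mono hI0 ((hI1.add hI2).div_const 2 |>.congr ?_) ?_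
    · filter_upwards with t
      simp only [Pi.add_apply]
      ring
    · intro t
      rcases eq_or_lt_of_le (hψ0 t) with h | h
      · simp [← h]
      · apply mul_le_mul_of_nonneg_right _ (hψ0 t)
        have hc := hf.2 (Set.mem_univ (x - t)) (Set.mem_univ (x + t))
          (by norm_num : (0:ℝ) ≤ 1/2) (by norm_num : (0:ℝ) ≤ 1/2) (by norm_num)
        have hx : (1/2 : ℝ) • (x - t) + (1/2 : ℝ) • (x + t) = x := by
          simp only [smul_eq_mul]; ring
        rw [hx] at hc
        rw [smul_eq_mul, smul_eq_mul] at hc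
        linarith
  calc f x = ∫ t, f x * ψ t := by rw [integral_const_mul, hψint1, mul_one]
    _ ≤ ∫ t, f (x - t) * ψ t := key
    _ = mollify φ ε f x := rfl
end

section
/- Let f : ℝ → ℝⁿ be continuous, let a < b be real numbers, let φ be a mollifier and ε > 0. Let f̄ : ℝ → ℝⁿ be the constant extension of f from [a,b] (f̄(t) = f(a) for t ≤ a, f̄(t) = f(t) for a ≤ t ≤ b, f̄(t) = f(b) for t ≥ b), and define the componentwise mollification F(t) := ∫_ℝ f̄(t−s)·φ_ε(s) ds. Then the total variation of F over [a,b] is at most that of f: L(F; [a, b]) ≤ L(f; [a, b]). -/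
open MeasureTheory

/-- Componentwise mollification of a vector-valued path:
`F_ε(t) = ∫ f(t - s) φ_ε(s) ds` with `φ_ε s = (1/ε) φ(s/ε)`. -/
noncomputable def mollifyV {n : ℕ} (φ : ℝ → ℝ) (ε : ℝ)
    (f : ℝ → EuclideanSpace ℝ (Fin n)) (t : ℝ) : EuclideanSpace ℝ (Fin n) :=
  ∫ s, ((1 / ε) * φ (s / ε)) • f (t - s)
/-- Constant extension of `f` outside `[a, b]`. -/
noncomputable def constExt {n : ℕ} (f : ℝ → EuclideanSpace ℝ (Fin n)) (a b : ℝ)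
    (t : ℝ) : EuclideanSpace ℝ (Fin n) :=
  if t ≤ a then f a else if t ≤ b then f t else f b

theorem eVariationOn_mollify_le {n : ℕ}
    (f : ℝ → EuclideanSpace ℝ (Fin n)) (hf : Continuous f)
    (a b : ℝ) (hab : a < b)
    (φ : ℝ → ℝ) (hφ : IsMollifier φ) (ε : ℝ) (hε : 0 < ε) :
    eVariationOn (mollifyV φ ε (constExt f a b)) (Set.Icc a b) ≤
      eVariationOn f (Set.Icc a b) := by
  set g := constExt f a b with hg
  have hgeq : g = fun t => f (min b (max a t)) := by
    funext t
    simp only [hg, constExt]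
    split_ifs with h1 h2
    · rw [max_eq_left h1, min_eq_right hab.le]
    · rw [max_eq_right (le_of_not_ge h1), min_eq_right h2]
    · rw [max_eq_right (le_of_not_ge h1), min_eq_left (le_of_not_ge h2)]
  have hgc : Continuous g := by
    rw [hgeq]
    exact hf.comp (continuous_const.min (continuous_const.max continuous_id))
  -- variation of g on univ equals variation of f on [a,b]
  have hVar : eVariationOn g Set.univ = eVariationOn f (Set.Icc a b) := by
    have hsplit : (Set.univ : Set ℝ) = Set.Iic a ∪ (Set.Icc a b ∪ Set.Ici b) := by
      ext t
      simp only [Set.mem_univ, Set.mem_union, Set.mem_Iic, Set.mem_Icc, Set.mem_Ici, true_iff]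
      rcases le_total t a with h | h
      · exact Or.inl h
      rcases le_total t b with h' | h'
      · exact Or.inr (Or.inl ⟨h, h'⟩)
      · exact Or.inr (Or.inr h')
    have hleast : IsLeast (Set.Icc a b ∪ Set.Ici b) a := by
      constructor
      · exact Or.inl ⟨le_refl a, hab.le⟩
      · rintro y (⟨h1, _⟩ | h1)
        · exact h1
        · exact hab.le.trans h1
    rw [hsplit, eVariationOn.union g isGreatest_Iic hleast,
      eVariationOn.union g (isGreatest_Icc hab.le) isLeast_Ici]
    have h1 : eVariationOn g (Set.Iic a) = 0 := by
      apply eVariationOn.constant_on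
      rintro x ⟨t, ht, rfl⟩ y ⟨t', ht', rfl⟩
      simp only [hg, constExt, if_pos (Set.mem_Iic.mp ht), if_pos (Set.mem_Iic.mp ht')]
    have h2 : eVariationOn g (Set.Ici b) = 0 := by
      apply eVariationOn.constant_on
      have key : ∀ t ∈ Set.Ici b, g t = f b := by
        intro t ht
        simp only [hg, constExt]
        rw [Set.mem_Ici] at ht
        split_ifs with hh1 hh2
        · exact absurd hh1 (not_le.mpr (lt_of_lt_of_le hab ht))
        · exact congrArg f (le_antisymm hh2 ht)
        · rfl
      rintro x ⟨t, ht, rfl⟩ y ⟨t', ht', rfl⟩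
      rw [key t ht, key t' ht']
    have h3 : eVariationOn g (Set.Icc a b) = eVariationOn f (Set.Icc a b) := by
      apply eVariationOn.eq_of_eqOn
      intro t ht
      simp only [hg, constExt]
      split_ifs with hh1 hh2
      · exact congrArg f (le_antisymm ht.1 hh1)
      · rfl
      · exact absurd ht.2 hh2
    rw [h1, h2, h3, zero_add, add_zero]
  rcases eq_top_or_lt_top (eVariationOn f (Set.Icc a b)) with hV | hV
  · rw [hV]; exact le_top
  set V := eVariationOn g Set.univ with hVdef
  have hVne : V ≠ ⊤ := by rw [hVar]; exact hV.ne
  set C := V.toReal with hC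
  have hC0 : 0 ≤ C := ENNReal.toReal_nonneg
  -- the mollifier kernel
  set ψ : ℝ → ℝ := fun s => (1 / ε) * φ (s / ε) with hψ
  have hψc : Continuous ψ :=
    continuous_const.mul (hφ.smooth.continuous.comp (continuous_id.div_const ε))
  have hψnn : ∀ s, 0 ≤ ψ s := fun s =>
    mul_nonneg (by positivity) (hφ.nonneg _)
  have hψsupp : HasCompactSupport ψ := by
    apply HasCompactSupport.intro (isCompact_Icc (a := -ε) (b := ε))
    intro x hx
    have hφ0 : φ (x / ε) = 0 := by
      by_contra h
      have hmem := hφ.supp h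
      rw [Set.mem_Icc] at hmem
      have h1 : -ε ≤ x := by
        have := hmem.1
        rw [le_div_iff₀ hε] at this
        linarith
      have h2 : x ≤ ε := by
        have := hmem.2
        rw [div_le_one hε] at this
        linarith
      exact hx ⟨h1, h2⟩
    simp [hψ, hφ0]
  have hψint : Integrable ψ := hψc.integrable_of_hasCompactSupport hψsupp
  have hψ1 : ∫ s, ψ s = 1 := by
    simp only [hψ]
    rw [integral_const_mul, Measure.integral_comp_div φ ε, hφ.integral_one,
      abs_of_pos hε]
    simp
    field_simp
  -- integrability of the mollification integrand
  have hInt : ∀ t, Integrable (fun s => ψ s • g (t - s)) := by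
    intro t
    exact (hψc.smul (hgc.comp (continuous_const.sub continuous_id))).integrable_of_hasCompactSupport
      (hψsupp.smul_right)
  have hIntN : ∀ x y : ℝ, Integrable (fun s => ψ s * ‖g (x - s) - g (y - s)‖) := by
    intro x y
    exact (hψc.mul (((hgc.comp (continuous_const.sub continuous_id)).sub
      (hgc.comp (continuous_const.sub continuous_id))).norm)).integrable_of_hasCompactSupport
      (hψsupp.mul_right)
  -- key difference bound
  have hdiff : ∀ x y : ℝ, ‖mollifyV φ ε g x - mollifyV φ ε g y‖ ≤
      ∫ s, ψ s * ‖g (x - s) - g (y - s)‖ := by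
    intro x y
    have heq : mollifyV φ ε g x - mollifyV φ ε g y = ∫ s, ψ s • (g (x - s) - g (y - s)) := by
      rw [show mollifyV φ ε g x = ∫ s, ψ s • g (x - s) from rfl,
        show mollifyV φ ε g y = ∫ s, ψ s • g (y - s) from rfl,
        ← integral_sub (hInt x) (hInt y)]
      congr 1
      funext s
      rw [smul_sub]
    rw [heq]
    refine (norm_integral_le_integral_norm _).trans_eq ?_
    congr 1
    funext s
    rw [norm_smul, Real.norm_eq_abs, abs_of_nonneg (hψnn s)]
  -- main estimate for any partition
  refine iSup_le ?_
  rintro ⟨N, u, hu, hus⟩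
  rw [← hVar]
  -- the real sum bound
  have hreal : ∑ i ∈ Finset.range N,
      ‖mollifyV φ ε g (u (i + 1)) - mollifyV φ ε g (u i)‖ ≤ C := by
    have step1 : ∑ i ∈ Finset.range N,
        ‖mollifyV φ ε g (u (i + 1)) - mollifyV φ ε g (u i)‖ ≤
        ∑ i ∈ Finset.range N, ∫ s, ψ s * ‖g (u (i + 1) - s) - g (u i - s)‖ :=
      Finset.sum_le_sum fun i _ => hdiff _ _
    have step2 : ∑ i ∈ Finset.range N, ∫ s, ψ s * ‖g (u (i + 1) - s) - g (u i - s)‖ =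
        ∫ s, ∑ i ∈ Finset.range N, ψ s * ‖g (u (i + 1) - s) - g (u i - s)‖ :=
      (integral_finset_sum _ fun i _ => hIntN _ _).symm
    have hpt : ∀ s : ℝ, ∑ i ∈ Finset.range N, ψ s * ‖g (u (i + 1) - s) - g (u i - s)‖ ≤
        ψ s * C := by
      intro s
      rw [← Finset.mul_sum]
      apply mul_le_mul_of_nonneg_left _ (hψnn s)
      -- sum of norms ≤ C via variation of g on univ
      have hmono : Monotone fun i => u i - s := fun i j h => by
        simpa using sub_le_sub_right (hu h) s
      have hsum := eVariationOn.sum_le (f := g) (n := N) hmono (fun i => Set.mem_univ _)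
      have hconv : ENNReal.ofReal (∑ i ∈ Finset.range N,
          ‖g (u (i + 1) - s) - g (u i - s)‖) =
          ∑ i ∈ Finset.range N, edist (g (u (i + 1) - s)) (g (u i - s)) := by
        rw [ENNReal.ofReal_sum_of_nonneg fun i _ => norm_nonneg _]
        congr 1
        funext i
        rw [edist_dist, dist_eq_norm]
      calc ∑ i ∈ Finset.range N, ‖g (u (i + 1) - s) - g (u i - s)‖ =
          (ENNReal.ofReal (∑ i ∈ Finset.range N, ‖g (u (i + 1) - s) - g (u i - s)‖)).toReal := by
            rw [ENNReal.toReal_ofReal (Finset.sum_nonneg fun i _ => norm_nonneg _)]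
        _ ≤ C := by
            rw [hC]
            exact ENNReal.toReal_mono hVne (hconv ▸ hsum)
    have step3 : ∫ s, ∑ i ∈ Finset.range N, ψ s * ‖g (u (i + 1) - s) - g (u i - s)‖ ≤
        ∫ s, ψ s * C := by
      apply integral_mono (integrable_finset_sum _ fun i _ => hIntN _ _) (hψint.mul_const C)
      exact hpt
    have step4 : ∫ s, ψ s * C = C := by
      rw [integral_mul_const, hψ1, one_mul]
    linarith [step1.trans (step2 ▸ step3.trans_eq step4)]
  -- convert back to edist
  have hconvF : ∑ i ∈ Finset.range N,
      edist (mollifyV φ ε g (u (i + 1))) (mollifyV φ ε g (u i)) =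
      ENNReal.ofReal (∑ i ∈ Finset.range N,
        ‖mollifyV φ ε g (u (i + 1)) - mollifyV φ ε g (u i)‖) := by
    rw [ENNReal.ofReal_sum_of_nonneg fun i _ => norm_nonneg _]
    congr 1
    funext i
    rw [edist_dist, dist_eq_norm]
  rw [hconvF]
  calc ENNReal.ofReal (∑ i ∈ Finset.range N,
        ‖mollifyV φ ε g (u (i + 1)) - mollifyV φ ε g (u i)‖) ≤ ENNReal.ofReal C :=
        ENNReal.ofReal_le_ofReal hreal
    _ ≤ V := ENNReal.ofReal_toReal_le
end

section
/- Let P₀, P₁, P₂ ∈ ℝⁿ, let f̄ : ℝ → ℝⁿ be the extended two-segment function, let φ be a mollifier and ε > 0, and let F_ε := f̄ ⋆ φ_ε componentwise. Then F_ε is differentiable at every t ∈ ℝ and F_ε′(t) = A₁(t)·(P₁ − P₀) + A₂(t)·(P₂ − P₁), where A₁(t) := ∫_{(−∞,1]} φ_ε(t−s) ds and A₂(t) := ∫_{[1,∞)} φ_ε(t−s) ds. -/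
open MeasureTheory

/-- Extended two-segment function through `P₀, P₁, P₂`. -/
noncomputable def twoSeg {n : ℕ} (P0 P1 P2 : EuclideanSpace ℝ (Fin n)) (t : ℝ) :
    EuclideanSpace ℝ (Fin n) :=
  if t ≤ 1 then P0 + t • (P1 - P0) else P1 + (t - 1) • (P2 - P1)

section MollifyHelpers
open Set

lemma psi_supp_facts (ψ : ℝ → ℝ) (ε : ℝ)
    (h0 : ∀ x, x ∉ Set.Icc (-ε) ε → ψ x = 0) :
    tsupport ψ ⊆ Set.Icc (-ε) ε := by
  apply closure_minimal _ isClosed_Icc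
  intro x hx
  by_contra hc
  exact hx (h0 x hc)

lemma deriv_zero_outside (ψ : ℝ → ℝ) (ε : ℝ)
    (h0 : ∀ x, x ∉ Set.Icc (-ε) ε → ψ x = 0) :
    ∀ x, x ∉ Set.Icc (-ε) ε → deriv ψ x = 0 := by
  intro x hx
  by_contra hc
  exact hx (psi_supp_facts ψ ε h0 (support_deriv_subset hc))

/-- whole-line integral of the derivative of a compactly supported smooth function is 0 -/
lemma integral_deriv_zero (ψ : ℝ → ℝ) (hs : ContDiff ℝ (⊤ : ℕ∞) ψ) (ε : ℝ) (hε : 0 < ε)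
    (h0 : ∀ x, x ∉ Set.Icc (-ε) ε → ψ x = 0) :
    ∫ s, deriv ψ s = 0 := by
  have hsub : Function.support (deriv ψ) ⊆ Set.Ioc (-ε - 1) (ε + 1) := by
    intro x hx
    have hx2 : x ∈ Set.Icc (-ε) ε := by
      by_contra hc
      exact hx (deriv_zero_outside ψ ε h0 x hc)
    exact ⟨by linarith [hx2.1], by linarith [hx2.2]⟩
  rw [← intervalIntegral.integral_eq_integral_of_support_subset hsub]
  rw [intervalIntegral.integral_deriv_eq_sub
    (fun x _ => (hs.differentiable (by simp)) x)
    ((hs.continuous_deriv (by simp)).intervalIntegrable _ _)]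
  rw [h0 _ (by simp only [Set.mem_Icc, not_and, not_le]; intro h; linarith), h0 _ (by simp only [Set.mem_Icc, not_and, not_le]; intro h; linarith), sub_zero]

lemma key1 (ψ : ℝ → ℝ) (hs : ContDiff ℝ (⊤ : ℕ∞) ψ) (ε : ℝ) (hε : 0 < ε)
    (h0 : ∀ x, x ∉ Set.Icc (-ε) ε → ψ x = 0) (t : ℝ) :
    ∫ s, deriv ψ s * min (t - s) 1 = ∫ s in Set.Iic 1, ψ (t - s) := by
  have hd0 := deriv_zero_outside ψ ε h0
  set b : ℝ := |t| + ε + 2 with hb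
  set a : ℝ := t - b with ha
  set c : ℝ := t - 1 with hc
  have habs1 : t ≤ |t| := le_abs_self t
  have habs2 : -|t| ≤ t := neg_abs_le t
  have haε : a < -ε := by rw [ha, hb]; linarith
  have hεb : ε < b := by rw [hb]; linarith [abs_nonneg t]
  have hac : a ≤ c := by rw [ha, hc, hb]; linarith [abs_nonneg t]
  have hcb : c ≤ b := by rw [hc, hb]; linarith
  have ha1 : a ≤ 1 := by linarith
  have hψb : ψ b = 0 := h0 b (by simp only [Set.mem_Icc, not_and, not_le]; intro _; linarith)
  have hψa : ψ a = 0 := h0 a (by simp only [Set.mem_Icc, not_and, not_le]; intro _; linarith)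
  have hcont : Continuous fun s => deriv ψ s * min (t - s) 1 :=
    (hs.continuous_deriv (by simp)).mul (Continuous.min (by fun_prop) continuous_const)
  -- LHS to interval integral
  have hsub : Function.support (fun s => deriv ψ s * min (t - s) 1) ⊆ Set.Ioc a b := by
    intro x hx
    have hd : deriv ψ x ≠ 0 := fun h => hx (by simp [h])
    have hx2 : x ∈ Set.Icc (-ε) ε := by
      by_contra hcon; exact hd (hd0 x hcon)
    exact ⟨lt_of_lt_of_le haε hx2.1, le_trans hx2.2 hεb.le⟩
  rw [← intervalIntegral.integral_eq_integral_of_support_subset hsub]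
  rw [← intervalIntegral.integral_add_adjacent_intervals
    (hcont.intervalIntegrable a c) (hcont.intervalIntegrable c b)]
  -- first piece
  have hpiece1 : ∫ s in a..c, deriv ψ s * min (t - s) 1 = ψ c := by
    have : ∫ s in a..c, deriv ψ s * min (t - s) 1 = ∫ s in a..c, deriv ψ s := by
      apply intervalIntegral.integral_congr
      intro x hx
      rw [Set.uIcc_of_le hac] at hx
      have : (1:ℝ) ≤ t - x := by rw [hc] at hx; linarith [hx.2]
      simp only [min_eq_right this, mul_one]
    rw [this, intervalIntegral.integral_deriv_eq_sub
      (fun x _ => (hs.differentiable (by simp)) x)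
      ((hs.continuous_deriv (by simp)).intervalIntegrable _ _), hψa, sub_zero]
  -- second piece
  have hpiece2 : ∫ s in c..b, deriv ψ s * min (t - s) 1 = (∫ s in c..b, ψ s) - ψ c := by
    have heq : ∫ s in c..b, deriv ψ s * min (t - s) 1 = ∫ s in c..b, deriv ψ s * (t - s) := by
      apply intervalIntegral.integral_congr
      intro x hx
      rw [Set.uIcc_of_le hcb] at hx
      have : t - x ≤ 1 := by rw [hc] at hx; linarith [hx.1]
      simp only [min_eq_left this]
    rw [heq]
    have hparts := intervalIntegral.integral_deriv_mul_eq_sub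
      (u := ψ) (v := fun s => t - s) (u' := deriv ψ) (v' := fun _ => (-1:ℝ)) (a := c) (b := b)
      (fun x _ => ((hs.differentiable (by simp)) x).hasDerivAt)
      (fun x _ => by simpa using (hasDerivAt_id x).const_sub t)
      ((hs.continuous_deriv (by simp)).intervalIntegrable _ _)
      (continuous_const.intervalIntegrable _ _)
    have hsplit : ∫ x in c..b, (deriv ψ x * (t - x) + ψ x * (-1))
        = (∫ x in c..b, deriv ψ x * (t - x)) + ∫ x in c..b, ψ x * (-1) := by
      apply intervalIntegral.integral_add
      · exact ((hs.continuous_deriv (by simp)).mul (by fun_prop)).intervalIntegrable _ _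
      · exact (hs.continuous.mul continuous_const).intervalIntegrable _ _
    have hneg : ∫ x in c..b, ψ x * (-1) = -∫ x in c..b, ψ x := by
      simp [mul_neg_one, intervalIntegral.integral_neg]
    have htc : t - c = 1 := by rw [hc]; ring
    rw [hsplit, hneg] at hparts
    simp only [hψb, zero_mul, zero_sub, htc, mul_one] at hparts
    linarith
  rw [hpiece1, hpiece2]
  -- RHS to the same interval integral
  have hRHS : ∫ s in Set.Iic 1, ψ (t - s) = ∫ s in c..b, ψ s := by
    rw [← integral_indicator measurableSet_Iic]
    have hsub2 : Function.support (Set.indicator (Set.Iic 1) (fun s => ψ (t - s))) ⊆ Set.Ioc a 1 := by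
      intro x hx
      have hx1 : x ∈ Set.Iic 1 := by
        by_contra hcon
        exact hx (Set.indicator_of_notMem hcon _)
      have hx2 : ψ (t - x) ≠ 0 := by
        intro hcon; apply hx; rw [Set.indicator_of_mem hx1, hcon]
      have hx3 : t - x ∈ Set.Icc (-ε) ε := by
        by_contra hcon; exact hx2 (h0 _ hcon)
      refine ⟨?_, hx1⟩
      have := hx3.2
      rw [ha]; linarith
    rw [← intervalIntegral.integral_eq_integral_of_support_subset hsub2]
    have : ∫ x in a..1, Set.indicator (Set.Iic 1) (fun s => ψ (t - s)) x
        = ∫ x in a..1, ψ (t - x) := by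
      apply intervalIntegral.integral_congr
      intro x hx
      rw [Set.uIcc_of_le ha1] at hx
      exact Set.indicator_of_mem (show x ∈ Set.Iic 1 from hx.2) _
    rw [this, intervalIntegral.integral_comp_sub_left ψ t]
    have h1 : t - 1 = c := hc.symm
    have h2 : t - a = b := by rw [ha]; ring
    rw [h1, h2]
  rw [hRHS]
  ring

lemma key2 (ψ : ℝ → ℝ) (hs : ContDiff ℝ (⊤ : ℕ∞) ψ) (ε : ℝ) (hε : 0 < ε)
    (h0 : ∀ x, x ∉ Set.Icc (-ε) ε → ψ x = 0) (t : ℝ) :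
    ∫ s, deriv ψ s * max (t - s - 1) 0 = ∫ s in Set.Ici 1, ψ (t - s) := by
  have hd0 := deriv_zero_outside ψ ε h0
  set b : ℝ := |t| + ε + 2 with hb
  set a : ℝ := t - b with ha
  set c : ℝ := t - 1 with hc
  have habs1 : t ≤ |t| := le_abs_self t
  have habs2 : -|t| ≤ t := neg_abs_le t
  have haε : a < -ε := by rw [ha, hb]; linarith
  have hεb : ε < b := by rw [hb]; linarith [abs_nonneg t]
  have hac : a ≤ c := by rw [ha, hc, hb]; linarith [abs_nonneg t]
  have hcb : c ≤ b := by rw [hc, hb]; linarith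
  have h1b : (1:ℝ) ≤ b := by rw [hb]; linarith [abs_nonneg t]
  have htb : t + ε ≤ b := by rw [hb]; linarith
  have hψb : ψ b = 0 := h0 b (by simp only [Set.mem_Icc, not_and, not_le]; intro _; linarith)
  have hψa : ψ a = 0 := h0 a (by simp only [Set.mem_Icc, not_and, not_le]; intro _; linarith)
  have hcont : Continuous fun s => deriv ψ s * max (t - s - 1) 0 :=
    (hs.continuous_deriv (by simp)).mul (Continuous.max (by fun_prop) continuous_const)
  have hsub : Function.support (fun s => deriv ψ s * max (t - s - 1) 0) ⊆ Set.Ioc a b := by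
    intro x hx
    have hd : deriv ψ x ≠ 0 := fun h => hx (by simp [h])
    have hx2 : x ∈ Set.Icc (-ε) ε := by
      by_contra hcon; exact hd (hd0 x hcon)
    exact ⟨lt_of_lt_of_le haε hx2.1, le_trans hx2.2 hεb.le⟩
  rw [← intervalIntegral.integral_eq_integral_of_support_subset hsub]
  rw [← intervalIntegral.integral_add_adjacent_intervals
    (hcont.intervalIntegrable a c) (hcont.intervalIntegrable c b)]
  -- second piece vanishes
  have hpiece2 : ∫ s in c..b, deriv ψ s * max (t - s - 1) 0 = 0 := by
    have : ∫ s in c..b, deriv ψ s * max (t - s - 1) 0 = ∫ s in c..b, (0:ℝ) := by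
      apply intervalIntegral.integral_congr
      intro x hx
      rw [Set.uIcc_of_le hcb] at hx
      have : t - x - 1 ≤ 0 := by rw [hc] at hx; linarith [hx.1]
      simp only [max_eq_right this, mul_zero]
    rw [this, intervalIntegral.integral_zero]
  -- first piece
  have hpiece1 : ∫ s in a..c, deriv ψ s * max (t - s - 1) 0 = ∫ s in a..c, ψ s := by
    have heq : ∫ s in a..c, deriv ψ s * max (t - s - 1) 0
        = ∫ s in a..c, deriv ψ s * (t - s - 1) := by
      apply intervalIntegral.integral_congr
      intro x hx
      rw [Set.uIcc_of_le hac] at hx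
      have : (0:ℝ) ≤ t - x - 1 := by rw [hc] at hx; linarith [hx.2]
      simp only [max_eq_left this]
    rw [heq]
    have hparts := intervalIntegral.integral_deriv_mul_eq_sub
      (u := ψ) (v := fun s => t - s - 1) (u' := deriv ψ) (v' := fun _ => (-1:ℝ)) (a := a) (b := c)
      (fun x _ => ((hs.differentiable (by simp)) x).hasDerivAt)
      (fun x _ => by simpa using ((hasDerivAt_id x).const_sub t).sub_const 1)
      ((hs.continuous_deriv (by simp)).intervalIntegrable _ _)
      (continuous_const.intervalIntegrable _ _)
    have hsplit : ∫ x in a..c, (deriv ψ x * (t - x - 1) + ψ x * (-1))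
        = (∫ x in a..c, deriv ψ x * (t - x - 1)) + ∫ x in a..c, ψ x * (-1) := by
      apply intervalIntegral.integral_add
      · exact ((hs.continuous_deriv (by simp)).mul (by fun_prop)).intervalIntegrable _ _
      · exact (hs.continuous.mul continuous_const).intervalIntegrable _ _
    have hneg : ∫ x in a..c, ψ x * (-1) = -∫ x in a..c, ψ x := by
      simp [mul_neg_one, intervalIntegral.integral_neg]
    have htc : t - c - 1 = 0 := by rw [hc]; ring
    rw [hsplit, hneg] at hparts
    simp only [hψa, zero_mul, htc, mul_zero, sub_zero] at hparts
    linarith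
  rw [hpiece1, hpiece2, add_zero]
  -- RHS
  have hRHS : ∫ s in Set.Ici 1, ψ (t - s) = ∫ s in a..c, ψ s := by
    rw [MeasureTheory.integral_Ici_eq_integral_Ioi,
      ← integral_indicator measurableSet_Ioi]
    have hsub2 : Function.support (Set.indicator (Set.Ioi 1) (fun s => ψ (t - s)))
        ⊆ Set.Ioc 1 b := by
      intro x hx
      have hx1 : x ∈ Set.Ioi 1 := by
        by_contra hcon
        exact hx (Set.indicator_of_notMem hcon _)
      have hx2 : ψ (t - x) ≠ 0 := by
        intro hcon; apply hx; rw [Set.indicator_of_mem hx1, hcon]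
      have hx3 : t - x ∈ Set.Icc (-ε) ε := by
        by_contra hcon; exact hx2 (h0 _ hcon)
      refine ⟨hx1, ?_⟩
      have := hx3.1
      linarith
    rw [← intervalIntegral.integral_eq_integral_of_support_subset hsub2]
    have : ∫ x in (1:ℝ)..b, Set.indicator (Set.Ioi 1) (fun s => ψ (t - s)) x
        = ∫ x in (1:ℝ)..b, ψ (t - x) := by
      rw [intervalIntegral.integral_of_le h1b, intervalIntegral.integral_of_le h1b]
      apply setIntegral_congr_fun measurableSet_Ioc
      intro x hx
      exact Set.indicator_of_mem (show x ∈ Set.Ioi 1 from hx.1) _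
    rw [this, intervalIntegral.integral_comp_sub_left ψ t]
  rw [hRHS]

end MollifyHelpers

theorem hasDerivAt_mollify_twoSeg {n : ℕ}
    (P0 P1 P2 : EuclideanSpace ℝ (Fin n))
    (φ : ℝ → ℝ) (hφ : IsMollifier φ) (ε : ℝ) (hε : 0 < ε) (t : ℝ) :
    HasDerivAt (mollifyV φ ε (twoSeg P0 P1 P2))
      ((∫ s in Set.Iic (1 : ℝ), (1 / ε) * φ ((t - s) / ε)) • (P1 - P0) +
       (∫ s in Set.Ici (1 : ℝ), (1 / ε) * φ ((t - s) / ε)) • (P2 - P1)) t := by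
  classical
  set ψ : ℝ → ℝ := fun s => (1 / ε) * φ (s / ε) with hψdef
  have hψ_smooth : ContDiff ℝ (⊤ : ℕ∞) ψ :=
    contDiff_const.mul (hφ.smooth.comp (contDiff_id.div_const ε))
  have hψ0 : ∀ x, x ∉ Set.Icc (-ε) ε → ψ x = 0 := by
    intro x hx
    have hφ0 : φ (x / ε) = 0 := by
      by_contra h
      have h2 := hφ.supp h
      apply hx
      constructor
      · have h3 := mul_le_mul_of_nonneg_right h2.1 hε.le
        rw [div_mul_cancel₀ x hε.ne'] at h3; linarith
      · have h3 := mul_le_mul_of_nonneg_right h2.2 hε.le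
        rw [div_mul_cancel₀ x hε.ne'] at h3; linarith
    simp [hψdef, hφ0]
  have hd0 : ∀ x, x ∉ Set.Icc (-ε) ε → deriv ψ x = 0 := deriv_zero_outside ψ ε hψ0
  have hdc : Continuous (deriv ψ) := hψ_smooth.continuous_deriv (by simp)
  have hψ_cs : HasCompactSupport ψ := HasCompactSupport.intro isCompact_Icc hψ0
  set g := twoSeg P0 P1 P2 with hgdef
  have hg_eq : ∀ u, g u = P0 + (min u 1) • (P1 - P0) + (max (u - 1) 0) • (P2 - P1) := by
    intro u
    rw [hgdef, twoSeg]
    split_ifs with h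
    · rw [min_eq_left h, max_eq_right (by linarith : u - 1 ≤ 0), zero_smul, add_zero]
    · push_neg at h
      rw [min_eq_right h.le, max_eq_left (by linarith : (0:ℝ) ≤ u - 1), one_smul]
      abel
  have hg_cont : Continuous g := by
    rw [show g = fun u => P0 + (min u 1) • (P1 - P0) + (max (u - 1) 0) • (P2 - P1)
      from funext hg_eq]
    fun_prop
  have key := hψ_cs.hasDerivAt_convolution_left (μ := volume) (ContinuousLinearMap.lsmul ℝ ℝ)
    (hψ_smooth.of_le (by simp)) hg_cont.locallyIntegrable t
  have hval : convolution (deriv ψ) g (ContinuousLinearMap.lsmul ℝ ℝ) volume t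
      = (∫ s in Set.Iic (1 : ℝ), (1 / ε) * φ ((t - s) / ε)) • (P1 - P0) +
        (∫ s in Set.Ici (1 : ℝ), (1 / ε) * φ ((t - s) / ε)) • (P2 - P1) := by
    have hconv : convolution (deriv ψ) g (ContinuousLinearMap.lsmul ℝ ℝ) volume t
        = ∫ s, deriv ψ s • g (t - s) := by
      simp only [convolution, ContinuousLinearMap.lsmul_apply]
    rw [hconv]
    have hexp : (fun s => deriv ψ s • g (t - s))
        = fun s => (deriv ψ s) • P0 + ((deriv ψ s * min (t - s) 1) • (P1 - P0)
            + (deriv ψ s * max (t - s - 1) 0) • (P2 - P1)) := by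
      funext s
      rw [hg_eq (t - s), smul_add, smul_add, smul_smul, smul_smul, add_assoc]
    rw [hexp]
    have i0 : Integrable (fun s => deriv ψ s • P0) := by
      have hc0 : Continuous fun s : ℝ => deriv ψ s • P0 := hdc.smul continuous_const
      apply hc0.integrable_of_hasCompactSupport
      apply HasCompactSupport.intro (isCompact_Icc (a := -ε) (b := ε))
      intro x hx; simp [hd0 x hx]
    have i1 : Integrable (fun s => (deriv ψ s * min (t - s) 1) • (P1 - P0)) := by
      have hc1 : Continuous fun s : ℝ => (deriv ψ s * min (t - s) 1) • (P1 - P0) :=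
        (hdc.mul ((continuous_const.sub continuous_id).min continuous_const)).smul
          continuous_const
      apply hc1.integrable_of_hasCompactSupport
      apply HasCompactSupport.intro (isCompact_Icc (a := -ε) (b := ε))
      intro x hx; simp [hd0 x hx]
    have i2 : Integrable (fun s => (deriv ψ s * max (t - s - 1) 0) • (P2 - P1)) := by
      have hc2 : Continuous fun s : ℝ => (deriv ψ s * max (t - s - 1) 0) • (P2 - P1) :=
        (hdc.mul (((continuous_const.sub continuous_id).sub continuous_const).max
          continuous_const)).smul continuous_const
      apply hc2.integrable_of_hasCompactSupport
      apply HasCompactSupport.intro (isCompact_Icc (a := -ε) (b := ε))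
      intro x hx; simp [hd0 x hx]
    have i12 : Integrable (fun s => (deriv ψ s * min (t - s) 1) • (P1 - P0)
        + (deriv ψ s * max (t - s - 1) 0) • (P2 - P1)) := i1.add i2
    rw [integral_add i0 i12, integral_add i1 i2,
      integral_smul_const, integral_smul_const, integral_smul_const,
      integral_deriv_zero ψ hψ_smooth ε hε hψ0, zero_smul, zero_add,
      key1 ψ hψ_smooth ε hε hψ0 t, key2 ψ hψ_smooth ε hε hψ0 t]
  rw [hval] at key
  exact key
end

section
/- Let P₀, P₁, P₂ ∈ ℝⁿ, let f̄ : ℝ → ℝⁿ be the extended two-segment function, let φ be a mollifier and ε > 0, and let F_ε := f̄ ⋆ φ_ε componentwise. Then F_ε is twice differentiable at every t ∈ ℝ and its second derivative satisfies F_ε″(t) = φ_ε(t−1)·((P₂ − P₁) − (P₁ − P₀)). -/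
open MeasureTheory

/-- FTC: derivative of `u ↦ ∫_{Iic u} f` for integrable continuous `f`. -/
lemma hasDerivAt_integral_Iic (f : ℝ → ℝ) (hf : Integrable f) (hc : Continuous f) (u : ℝ) :
    HasDerivAt (fun v : ℝ => ∫ x in Set.Iic v, f x) (f u) u := by
  have heq : (fun v : ℝ => ∫ x in Set.Iic v, f x)
      = fun v : ℝ => (∫ x in Set.Iic (0:ℝ), f x) + ∫ x in (0:ℝ)..v, f x := by
    funext v
    rw [← intervalIntegral.integral_Iic_sub_Iic hf.integrableOn hf.integrableOn]
    ring
  rw [heq]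
  exact (intervalIntegral.integral_hasDerivAt_right hf.intervalIntegrable
    (hc.stronglyMeasurableAtFilter _ _) hc.continuousAt).const_add _

lemma twoSeg_eq {n : ℕ} (P0 P1 P2 : EuclideanSpace ℝ (Fin n)) (r : ℝ) :
    twoSeg P0 P1 P2 r
      = P0 + r • (P1 - P0) + max (r - 1) 0 • ((P2 - P1) - (P1 - P0)) := by
  unfold twoSeg
  split_ifs with h
  · rw [max_eq_right (by linarith : r - 1 ≤ 0)]
    simp
  · rw [max_eq_left (by linarith : (0:ℝ) ≤ r - 1)]
    module

theorem secondDeriv_mollify_twoSeg {n : ℕ}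
    (P0 P1 P2 : EuclideanSpace ℝ (Fin n))
    (φ : ℝ → ℝ) (hφ : IsMollifier φ) (ε : ℝ) (hε : 0 < ε) :
    (∀ t : ℝ, DifferentiableAt ℝ (mollifyV φ ε (twoSeg P0 P1 P2)) t) ∧
    (∀ t : ℝ, HasDerivAt (deriv (mollifyV φ ε (twoSeg P0 P1 P2)))
        (((1 / ε) * φ ((t - 1) / ε)) • ((P2 - P1) - (P1 - P0))) t) := by
  set A := P1 - P0 with hA
  set D := (P2 - P1) - (P1 - P0) with hD
  set φε : ℝ → ℝ := fun s => (1 / ε) * φ (s / ε) with hφεdef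
  -- continuity and compact support of φε
  have hcont : Continuous φε :=
    continuous_const.mul (hφ.smooth.continuous.comp (continuous_id.div_const ε))
  have hsupp0 : ∀ x : ℝ, x ∉ Set.Icc (-ε) ε → φε x = 0 := by
    intro x hx
    have hx' : φ (x / ε) = 0 := by
      by_contra h
      have hmem := hφ.supp h
      simp only [Set.mem_Icc] at hmem hx
      rcases hmem with ⟨h1, h2⟩
      have l1 : -ε ≤ x := by
        have := (le_div_iff₀ hε).mp h1
        linarith
      have l2 : x ≤ ε := by
        have := (div_le_one hε).mp h2
        linarith
      exact hx ⟨l1, l2⟩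
    simp [hφεdef, hx']
  have hcs : HasCompactSupport φε := HasCompactSupport.intro isCompact_Icc hsupp0
  have hInt0 : Integrable φε := hcont.integrable_of_hasCompactSupport hcs
  have hInt1 : Integrable (fun s => s * φε s) :=
    (continuous_id.mul hcont).integrable_of_hasCompactSupport hcs.mul_left
  -- the scalar "antiderivatives"
  set Φ : ℝ → ℝ := fun u => ∫ x in Set.Iic u, φε x with hΦdef
  set Ψ : ℝ → ℝ := fun u => ∫ x in Set.Iic u, x * φε x with hΨdef
  set c₀ : ℝ := ∫ s, φε s with hc₀
  set m : ℝ := ∫ s, s * φε s with hm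
  -- closed form of the mollification
  have hF : mollifyV φ ε (twoSeg P0 P1 P2)
      = fun t => c₀ • P0 + (t * c₀ - m) • A
          + ((t - 1) * Φ (t - 1) - Ψ (t - 1)) • D := by
    funext t
    have hintg : Integrable (fun s => φε s * max (t - s - 1) 0) := by
      refine (hcont.mul ?_).integrable_of_hasCompactSupport hcs.mul_right
      exact ((continuous_const.sub continuous_id).sub continuous_const).max continuous_const
    have hpt : ∀ s : ℝ, φε s • twoSeg P0 P1 P2 (t - s)
        = φε s • P0 + ((t - s) * φε s) • A + (φε s * max (t - s - 1) 0) • D := by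
      intro s
      rw [twoSeg_eq]
      rw [smul_add, smul_add, smul_smul, smul_smul, mul_comm (φε s) (t - s)]
    have h1 : mollifyV φ ε (twoSeg P0 P1 P2) t
        = ∫ s, (φε s • P0 + ((t - s) * φε s) • A + (φε s * max (t - s - 1) 0) • D) := by
      unfold mollifyV
      exact integral_congr_ae (Filter.Eventually.of_forall hpt)
    have hi1 : Integrable (fun s => φε s • P0) := hInt0.smul_const P0
    have hi2' : Integrable (fun s => (t - s) * φε s) := by
      have : (fun s => (t - s) * φε s) = fun s => t * φε s - s * φε s := by
        funext s; ring
      rw [this]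
      exact (hInt0.const_mul t).sub hInt1
    have hi2 : Integrable (fun s => ((t - s) * φε s) • A) := hi2'.smul_const A
    have hi3 : Integrable (fun s => (φε s * max (t - s - 1) 0) • D) := hintg.smul_const D
    have hi12 : Integrable (fun s => φε s • P0 + ((t - s) * φε s) • A) := hi1.add hi2
    have e1 : (∫ s, (φε s • P0 + ((t - s) * φε s) • A + (φε s * max (t - s - 1) 0) • D))
        = (∫ s, (φε s • P0 + ((t - s) * φε s) • A))
          + ∫ s, (φε s * max (t - s - 1) 0) • D := integral_add hi12 hi3
    have e2 : (∫ s, (φε s • P0 + ((t - s) * φε s) • A))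
        = (∫ s, φε s • P0) + ∫ s, ((t - s) * φε s) • A := integral_add hi1 hi2
    rw [h1, e1, e2, integral_smul_const, integral_smul_const, integral_smul_const]
    congr 1
    · congr 1
      congr 1
      have : ∫ s, (t - s) * φε s = ∫ s, (t * φε s - s * φε s) := by
        congr 1; funext s; ring
      rw [this, integral_sub (hInt0.const_mul t) hInt1, integral_const_mul]
    · -- the max-integral equals (t-1)Φ(t-1) - Ψ(t-1)
      congr 1
      have e1 : ∫ s, φε s * max (t - s - 1) 0
          = ∫ s in Set.Iic (t - 1), φε s * max (t - s - 1) 0 := by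
        refine (setIntegral_eq_integral_of_forall_compl_eq_zero fun s hs => ?_).symm
        simp only [Set.mem_Iic, not_le] at hs
        rw [max_eq_right (by linarith : t - s - 1 ≤ 0), mul_zero]
      have e2 : ∫ s in Set.Iic (t - 1), φε s * max (t - s - 1) 0
          = ∫ s in Set.Iic (t - 1), ((t - 1) * φε s - s * φε s) := by
        refine setIntegral_congr_fun measurableSet_Iic fun s hs => ?_
        simp only [Set.mem_Iic] at hs
        rw [max_eq_left (by linarith : (0:ℝ) ≤ t - s - 1)]
        ring
      rw [e1, e2, integral_sub ((hInt0.const_mul (t - 1)).integrableOn) hInt1.integrableOn,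
        integral_const_mul]
  -- first derivative
  have hΦ' : ∀ t : ℝ, HasDerivAt (fun t : ℝ => Φ (t - 1)) (φε (t - 1)) t := by
    intro t
    have h0 := hasDerivAt_integral_Iic φε hInt0 hcont (t - 1)
    have h2 := h0.comp t ((hasDerivAt_id t).sub_const 1)
    simpa [hΦdef, Function.comp_def] using h2
  have hΨ' : ∀ t : ℝ, HasDerivAt (fun t : ℝ => Ψ (t - 1)) ((t - 1) * φε (t - 1)) t := by
    intro t
    have h0 := hasDerivAt_integral_Iic (fun x => x * φε x) hInt1
      (continuous_id.mul hcont) (t - 1)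
    have h2 := h0.comp t ((hasDerivAt_id t).sub_const 1)
    simpa [hΨdef, Function.comp_def] using h2
  have hF' : ∀ t : ℝ, HasDerivAt (mollifyV φ ε (twoSeg P0 P1 P2))
      (c₀ • A + Φ (t - 1) • D) t := by
    intro t
    rw [hF]
    have h1 : HasDerivAt (fun t : ℝ => t * c₀ - m) c₀ t := by
      simpa using ((hasDerivAt_id t).mul_const c₀).sub_const m
    have hG : HasDerivAt (fun t : ℝ => (t - 1) * Φ (t - 1) - Ψ (t - 1)) (Φ (t - 1)) t := by
      have := (((hasDerivAt_id t).sub_const 1).mul (hΦ' t)).sub (hΨ' t)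
      simp only [id_eq, Pi.mul_def, Pi.sub_def] at this
      exact this.congr_deriv (by ring)
    have := ((hasDerivAt_const t (c₀ • P0)).add (h1.smul_const A)).add (hG.smul_const D)
    simpa only [zero_add, Pi.add_def] using this
  have hderiv : deriv (mollifyV φ ε (twoSeg P0 P1 P2))
      = fun t => c₀ • A + Φ (t - 1) • D := by
    funext t
    exact (hF' t).deriv
  refine ⟨fun t => (hF' t).differentiableAt, fun t => ?_⟩
  rw [hderiv]
  have h := (hasDerivAt_const t (c₀ • A)).add ((hΦ' t).smul_const D)
  simpa only [zero_add, Pi.add_def, hφεdef] using h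
end

section
/- Let P₀, P₁, P₂ ∈ ℝ², write P̃₁ := P₁ − P₀ and P̃₂ := P₂ − P₁, let f̄ : ℝ → ℝ² be the extended two-segment function, let φ be a mollifier and ε > 0, and let F_ε := f̄ ⋆ φ_ε componentwise. Suppose m := inf_{s ∈ [0,1]} ‖s·P̃₁ + (1−s)·P̃₂‖ > 0. Then the planar curvature of F_ε satisfies, for every t ∈ ℝ, κ(t) := |cross(F_ε″(t), F_ε′(t))| / ‖F_ε′(t)‖³ ≤ (1/ε)·(sup_{x∈ℝ} |φ(x)|)·|cross(P̃₁, P̃₂)| / m³, where cross((u₁,u₂),(v₁,v₂)) := u₁v₂ − u₂v₁. -/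
open MeasureTheory

/-- Planar cross product `u₁v₂ − u₂v₁`. -/
noncomputable def cross2 (u v : EuclideanSpace ℝ (Fin 2)) : ℝ :=
  u 0 * v 1 - u 1 * v 0

/-- `x ↦ k * max (x - c - 1) 0` is `|k|`-Lipschitz. -/
lemma lip_mul_max (k c : ℝ) :
    LipschitzWith (Real.nnabs k) (fun x : ℝ => k * max (x - c - 1) 0) := by
  refine LipschitzWith.of_dist_le_mul fun x y => ?_
  simp only [Real.dist_eq, Real.coe_nnabs, ← mul_sub, abs_mul]
  have h1 : |max (x - c - 1) 0 - max (y - c - 1) 0| ≤ |x - c - 1 - (y - c - 1)| :=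
    abs_max_sub_max_le_abs _ _ _
  have h2 : x - c - 1 - (y - c - 1) = x - y := by ring
  rw [h2] at h1
  exact mul_le_mul_of_nonneg_left h1 (abs_nonneg k)

set_option maxHeartbeats 1000000 in
theorem curvature_bound_mollify_twoSeg
    (P0 P1 P2 : EuclideanSpace ℝ (Fin 2))
    (φ : ℝ → ℝ) (hφ : IsMollifier φ) (ε : ℝ) (hε : 0 < ε)
    (m : ℝ)
    (hm : m = sInf ((fun s : ℝ =>
      ‖s • (P1 - P0) + (1 - s) • (P2 - P1)‖) '' Set.Icc 0 1))
    (hm_pos : 0 < m) :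
    ∀ t : ℝ,
      |cross2 (deriv (deriv (mollifyV φ ε (twoSeg P0 P1 P2))) t)
              (deriv (mollifyV φ ε (twoSeg P0 P1 P2)) t)| /
        ‖deriv (mollifyV φ ε (twoSeg P0 P1 P2)) t‖ ^ 3 ≤
      (1 / ε) * (⨆ x : ℝ, |φ x|) * |cross2 (P1 - P0) (P2 - P1)| / m ^ 3 := by
  intro t
  classical
  obtain ⟨hsmooth, hsupp, hnn, hint1⟩ := hφ
  set v1 := P1 - P0 with hv1
  set v2 := P2 - P1 with hv2
  set φe : ℝ → ℝ := fun s => (1 / ε) * φ (s / ε) with hφe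
  have hφc : Continuous φ := hsmooth.continuous
  have hφcs : HasCompactSupport φ :=
    HasCompactSupport.intro isCompact_Icc fun x hx => by
      by_contra h; exact hx (hsupp h)
  have hφec : Continuous φe := continuous_const.mul (hφc.comp (continuous_id.div_const ε))
  have hφe_zero : ∀ s : ℝ, s < -ε → φe s = 0 := by
    intro s hs
    have hdiv : s / ε < -1 := (div_lt_iff₀ hε).2 (by linarith)
    have hz : φ (s / ε) = 0 := by
      by_contra h
      have := (hsupp h).1
      linarith
    simp [hφe, hz]
  have hφecs : HasCompactSupport φe :=
    HasCompactSupport.intro (isCompact_Icc (a := -ε) (b := ε)) fun x hx => by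
      rw [Set.mem_Icc] at hx
      push_neg at hx
      rcases lt_or_ge x (-ε) with h | h
      · exact hφe_zero x h
      · have hgt : ε < x := hx h
        have hdiv : (1 : ℝ) < x / ε := (one_lt_div hε).2 hgt
        have hz : φ (x / ε) = 0 := by
          by_contra hc
          have := (hsupp hc).2
          linarith
        simp [hφe, hz]
  have hφe_i : Integrable φe := hφec.integrable_of_hasCompactSupport hφecs
  have hφe_nn : ∀ s, 0 ≤ φe s := fun s => mul_nonneg (by positivity) (hnn _)
  have hφe_int1 : ∫ s, φe s = 1 := by
    rw [hφe]
    rw [MeasureTheory.integral_const_mul]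
    rw [MeasureTheory.Measure.integral_comp_div φ ε, hint1, smul_eq_mul, mul_one, abs_of_pos hε]
    field_simp
  -- rewrite twoSeg
  have hseg : ∀ u : ℝ, twoSeg P0 P1 P2 u = P0 + u • v1 + max (u - 1) 0 • (v2 - v1) := by
    intro u
    unfold twoSeg
    split_ifs with h
    · rw [max_eq_right (by linarith : u - 1 ≤ 0), zero_smul, add_zero, hv1]
    · push_neg at h
      rw [max_eq_left (by linarith : (0:ℝ) ≤ u - 1), hv1, hv2]
      module
  -- integrability helpers
  have icont : ∀ u : ℝ, Continuous fun s : ℝ => φe s * max (u - s - 1) 0 := by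
    intro u
    exact hφec.mul (((continuous_const.sub continuous_id).sub continuous_const).max
      continuous_const)
  have i3 : ∀ u : ℝ, Integrable fun s : ℝ => φe s * max (u - s - 1) 0 := by
    intro u
    exact (icont u).integrable_of_hasCompactSupport (hφecs.mul_right)
  have i2 : ∀ u : ℝ, Integrable fun s : ℝ => φe s * (u - s) := by
    intro u
    exact (hφec.mul (continuous_const.sub continuous_id)).integrable_of_hasCompactSupport
      (hφecs.mul_right)
  have iM : Integrable fun s : ℝ => φe s * s :=
    (hφec.mul continuous_id).integrable_of_hasCompactSupport (hφecs.mul_right)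
  set M : ℝ := ∫ s : ℝ, φe s * s with hM
  set G : ℝ → ℝ := fun u => ∫ s : ℝ, φe s * max (u - s - 1) 0 with hG
  -- explicit formula for the mollification
  have hF : ∀ u : ℝ, mollifyV φ ε (twoSeg P0 P1 P2) u
      = P0 + (u - M) • v1 + G u • (v2 - v1) := by
    intro u
    unfold mollifyV
    have hpt : ∀ s : ℝ, ((1 / ε) * φ (s / ε)) • twoSeg P0 P1 P2 (u - s)
        = φe s • P0 + ((φe s * (u - s)) • v1 + (φe s * max (u - s - 1) 0) • (v2 - v1)) := by
      intro s
      rw [hseg (u - s)]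
      rw [smul_add, smul_add, smul_smul, smul_smul, add_assoc]
    simp_rw [hpt]
    have ia : Integrable (fun s : ℝ => φe s • P0) := hφe_i.smul_const P0
    have ib : Integrable (fun s : ℝ => (φe s * (u - s)) • v1) := (i2 u).smul_const v1
    have ic : Integrable (fun s : ℝ => (φe s * max (u - s - 1) 0) • (v2 - v1)) :=
      (i3 u).smul_const _
    have ibc : Integrable (fun s : ℝ => (φe s * (u - s)) • v1
        + (φe s * max (u - s - 1) 0) • (v2 - v1)) := ib.add ic
    rw [integral_add ia ibc, integral_add ib ic,
      integral_smul_const, integral_smul_const, integral_smul_const, hφe_int1, one_smul]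
    rw [add_assoc]
    congr 2
    have hsplit : (fun s : ℝ => φe s * (u - s)) = fun s => u * φe s - φe s * s := by
      funext s; ring
    rw [hsplit, integral_sub ((hφe_i.const_mul u)) iM, MeasureTheory.integral_const_mul,
      hφe_int1, mul_one]
  -- derivative of G
  have hGd : ∀ u : ℝ, HasDerivAt G (∫ s in Set.Iio (u - 1), φe s) u := by
    intro u
    have hae : ∀ᵐ s : ℝ, s ≠ u - 1 := by
      refine (MeasureTheory.ae_iff).2 ?_
      simp only [ne_eq, not_not, Set.setOf_eq_eq_singleton]
      exact measure_singleton _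
    have hdiff : ∀ s : ℝ, s ≠ u - 1 →
        HasDerivAt (fun x => φe s * max (x - s - 1) 0)
          (Set.indicator (Set.Iio (u - 1)) φe s) u := by
      intro s hs
      rcases lt_or_gt_of_ne hs with h | h
      · rw [Set.indicator_of_mem (Set.mem_Iio.2 h)]
        have hnice : HasDerivAt (fun x : ℝ => φe s * (x - s - 1)) (φe s) u := by
          simpa using (((hasDerivAt_id u).sub_const s).sub_const 1).const_mul (φe s)
        apply hnice.congr_of_eventuallyEq
        filter_upwards [Ioi_mem_nhds (show s + 1 < u by linarith)] with x hx
        rw [max_eq_left (by simp only [Set.mem_Ioi] at hx; linarith)]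
      · rw [Set.indicator_of_notMem (by simp only [Set.mem_Iio, not_lt]; linarith)]
        apply (hasDerivAt_const u (0:ℝ)).congr_of_eventuallyEq
        filter_upwards [Iio_mem_nhds (show u < s + 1 by linarith)] with x hx
        rw [max_eq_right (by simp only [Set.mem_Iio] at hx; linarith), mul_zero]
    have hlip : ∀ s : ℝ, LipschitzOnWith (Real.nnabs (φe s))
        (fun x : ℝ => φe s * max (x - s - 1) 0) (Metric.ball u 1) :=
      fun s => (lip_mul_max (φe s) s).lipschitzOnWith
    have key := hasDerivAt_integral_of_dominated_loc_of_lip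
      (F := fun x s => φe s * max (x - s - 1) 0)
      (F' := Set.indicator (Set.Iio (u - 1)) φe) (x₀ := u) (bound := φe)
      (Metric.ball_mem_nhds u one_pos)
      (Filter.Eventually.of_forall fun x => (icont x).aestronglyMeasurable)
      (i3 u)
      ((hφec.aestronglyMeasurable).indicator measurableSet_Iio)
      (Filter.Eventually.of_forall hlip)
      hφe_i
      (hae.mono fun s hs => hdiff s hs)
    have h2 := key.2
    rwa [MeasureTheory.integral_indicator measurableSet_Iio] at h2
  -- interval-integral form
  set a : ℝ := -(ε + 1) with ha
  have hIio : ∀ u : ℝ, ∫ s in Set.Iio u, φe s = ∫ s in a..u, φe s := by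
    intro u
    have hzero_Iic : ∀ s ∈ Set.Iic a, φe s = 0 := fun s hs => by
      refine hφe_zero s ?_
      have : s ≤ -(ε + 1) := hs
      linarith
    rcases le_or_gt a u with h | h
    · rw [intervalIntegral.integral_of_le h, ← MeasureTheory.integral_Iic_eq_integral_Iio,
        ← Set.Iic_union_Ioc_eq_Iic h,
        MeasureTheory.setIntegral_union (Set.Iic_disjoint_Ioc le_rfl) measurableSet_Ioc
          hφe_i.integrableOn hφe_i.integrableOn,
        MeasureTheory.setIntegral_eq_zero_of_forall_eq_zero hzero_Iic, zero_add]
    · have z1 : ∫ s in Set.Iio u, φe s = 0 :=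
        MeasureTheory.setIntegral_eq_zero_of_forall_eq_zero
          (fun s hs => hφe_zero s (by
            have hsu : s < u := hs
            rw [ha] at h; linarith))
      have z2 : ∫ s in Set.Ioc u a, φe s = 0 :=
        MeasureTheory.setIntegral_eq_zero_of_forall_eq_zero
          (fun s hs => hφe_zero s (by
            have hsa : s ≤ a := hs.2
            rw [ha] at hsa; linarith))
      rw [intervalIntegral.integral_of_ge h.le, z1, z2, neg_zero]
  set β : ℝ → ℝ := fun u => ∫ s in Set.Iio (u - 1), φe s with hβ
  -- first derivative of the mollification
  have hF1 : ∀ u : ℝ, HasDerivAt (mollifyV φ ε (twoSeg P0 P1 P2))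
      (v1 + β u • (v2 - v1)) u := by
    intro u
    have h1 : HasDerivAt (fun x : ℝ => P0 + (x - M) • v1) v1 u := by
      simpa using (((hasDerivAt_id u).sub_const M).smul_const v1).const_add P0
    have h2 : HasDerivAt (fun x => G x • (v2 - v1)) (β u • (v2 - v1)) u :=
      (hGd u).smul_const _
    have := (h1.add h2)
    exact this.congr_of_eventuallyEq (Filter.Eventually.of_forall hF)
  have hderiv : deriv (mollifyV φ ε (twoSeg P0 P1 P2)) = fun u => v1 + β u • (v2 - v1) :=
    funext fun u => (hF1 u).deriv
  -- second derivative
  have hβd : HasDerivAt β (φe (t - 1)) t := by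
    have hI : IntervalIntegrable φe volume a (t - 1) := hφe_i.intervalIntegrable
    have h1 : HasDerivAt (fun y => ∫ s in a..y, φe s) (φe (t - 1)) (t - 1) :=
      intervalIntegral.integral_hasDerivAt_right hI
        hφec.stronglyMeasurable.stronglyMeasurableAtFilter hφec.continuousAt
    have h2 : HasDerivAt (fun u : ℝ => u - 1) 1 t := (hasDerivAt_id t).sub_const 1
    have hcomp := h1.comp t h2
    have hfun : β = (fun y => ∫ s in a..y, φe s) ∘ (fun u : ℝ => u - 1) := by
      funext u; simp only [Function.comp, hβ, hIio]
    rw [hfun]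
    simpa using hcomp
  have hF2 : HasDerivAt (fun u => v1 + β u • (v2 - v1)) (φe (t - 1) • (v2 - v1)) t :=
    (hβd.smul_const _).const_add v1
  have hd2 : deriv (deriv (mollifyV φ ε (twoSeg P0 P1 P2))) t = φe (t - 1) • (v2 - v1) := by
    rw [hderiv]; exact hF2.deriv
  have hd1 : deriv (mollifyV φ ε (twoSeg P0 P1 P2)) t = v1 + β t • (v2 - v1) := (hF1 t).deriv
  -- cross product computation
  have hc : cross2 (φe (t - 1) • (v2 - v1)) (v1 + β t • (v2 - v1))
      = -(φe (t - 1) * cross2 v1 v2) := by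
    simp only [cross2, PiLp.smul_apply, PiLp.add_apply, PiLp.sub_apply, smul_eq_mul]
    ring
  -- bounds on β
  have hβ0 : 0 ≤ β t := setIntegral_nonneg measurableSet_Iio fun s _ => hφe_nn s
  have hβ1 : β t ≤ 1 := by
    have := MeasureTheory.setIntegral_le_integral (s := Set.Iio (t - 1)) hφe_i
      (Filter.Eventually.of_forall hφe_nn)
    rwa [hφe_int1] at this
  -- lower bound on the norm of the derivative
  have hmle : m ≤ ‖v1 + β t • (v2 - v1)‖ := by
    rw [hm]
    apply csInf_le
    · refine ⟨0, ?_⟩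
      rintro x ⟨s, -, rfl⟩
      exact norm_nonneg _
    · refine ⟨1 - β t, ⟨by linarith, by linarith⟩, ?_⟩
      show ‖(1 - β t) • v1 + (1 - (1 - β t)) • v2‖ = ‖v1 + β t • (v2 - v1)‖
      congr 1
      rw [sub_sub_cancel]
      simp only [hv1, hv2]
      module
  -- bound by the sup of |φ|
  obtain ⟨C, hC⟩ := hφc.bounded_above_of_compact_support hφcs
  have hbdd : BddAbove (Set.range fun x => |φ x|) := by
    refine ⟨C, ?_⟩
    rintro y ⟨x, rfl⟩
    simpa [Real.norm_eq_abs] using hC x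
  have hS : φ ((t - 1) / ε) ≤ ⨆ x : ℝ, |φ x| :=
    le_trans (le_abs_self _) (le_ciSup hbdd _)
  have hSnn : (0:ℝ) ≤ ⨆ x : ℝ, |φ x| :=
    le_trans (abs_nonneg _) (le_ciSup hbdd 0)
  -- final estimate
  rw [hd2, hd1, hc, abs_neg, abs_mul, abs_of_nonneg (hφe_nn _)]
  have hnum : φe (t - 1) * |cross2 v1 v2| ≤ (1 / ε) * (⨆ x : ℝ, |φ x|) * |cross2 v1 v2| := by
    apply mul_le_mul_of_nonneg_right _ (abs_nonneg _)
    exact mul_le_mul_of_nonneg_left hS (by positivity)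
  apply div_le_div₀ (mul_nonneg (mul_nonneg (by positivity) hSnn) (abs_nonneg _)) hnum
    (by positivity)
  exact pow_le_pow_left₀ hm_pos.le hmle 3
end
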